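/- arXiv:2112.05645 — 5 statements merged into one kernel-verified Lean document; each statement's English description precedes it below -/
import Mathlib

section
/- Under Assumptions 1 and 3, every block-coordinate subproblem of the dual has a nonempty set of maximizers: for every vertex j ∈ V and every fixed choice of λ_t ∈ ℝ^N (t ∈ V, t ≠ j) and Λ_{t1,t2} ∈ ℝ^{N×N} ((t1,t2) ∈ E), the function λ_j ↦ φ(λ,Λ) attains its supremum over ℝ^N; and for every edge (j1,j2) ∈ E and every fixed choice of the other dual variables, the function Λ_{j1,j2} ↦ φ(λ,Λ) attains its supremum over ℝ^{N×N}. -/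
open scoped BigOperators
open Filter

noncomputable section

abbrev Tens (T N : ℕ) := (Fin T → Fin N) → ℝ

/-- Marginal projection `P_t(M)`. -/
def tproj {T N : ℕ} (t : Fin T) (M : Tens T N) : Fin N → ℝ :=
  fun i => ∑ x : Fin T → Fin N, if x t = i then M x else 0

/-- Bimarginal projection `P_{t₁,t₂}(M)`. -/
def tbiproj {T N : ℕ} (t₁ t₂ : Fin T) (M : Tens T N) : Fin N × Fin N → ℝ :=
  fun p => ∑ x : Fin T → Fin N, if x t₁ = p.1 ∧ x t₂ = p.2 then M x else 0

/-- Entropy `D(M)` (note `Real.log 0 = 0`, so the convention `0 · log 0 = 0` holds). -/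
def entropy {T N : ℕ} (M : Tens T N) : ℝ :=
  ∑ x : Fin T → Fin N, (M x * Real.log (M x) - M x + 1)

/-- A function into `ℝ ∪ {±∞}` is proper if it never takes the value `-∞`
and is not identically `+∞`. -/
def properFn {ι : Type*} (f : (ι → ℝ) → EReal) : Prop :=
  (∀ x, f x ≠ ⊥) ∧ ∃ x, f x ≠ ⊤

/-- Convexity for extended-real-valued functions. -/
def convexFn {ι : Type*} (f : (ι → ℝ) → EReal) : Prop :=
  ∀ x y : ι → ℝ, ∀ a b : ℝ, 0 ≤ a → 0 ≤ b → a + b = 1 →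
    f (a • x + b • y) ≤ ((a : ℝ) : EReal) * f x + ((b : ℝ) : EReal) * f y

/-- Dual variables: `λ_t ∈ ℝ^N` for each vertex and `Λ_{t₁,t₂} ∈ ℝ^{N×N}` for each edge. -/
abbrev DVar (T N : ℕ) (E : Finset (Fin T × Fin T)) :=
  (Fin T → Fin N → ℝ) × ({e : Fin T × Fin T // e ∈ E} → Fin N × Fin N → ℝ)

/-- Fenchel conjugate `f*(y) = sup_x ⟨y,x⟩ - f(x)`. -/
def fconj {ι : Type*} [Fintype ι] (f : (ι → ℝ) → EReal) (y : ι → ℝ) : EReal :=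
  ⨆ x : ι → ℝ, (((∑ i, y i * x i : ℝ)) : EReal) - f x

/-- The tensor `U(λ,Λ)(x) = ∏_t exp(λ_t(x t)/ε) · ∏_{(t₁,t₂)∈E} exp(Λ_{t₁,t₂}(x t₁, x t₂)/ε)`. -/
def Utens {T N : ℕ} (ε : ℝ) {E : Finset (Fin T × Fin T)} (p : DVar T N E)
    (x : Fin T → Fin N) : ℝ :=
  (∏ t : Fin T, Real.exp (p.1 t (x t) / ε)) *
    ∏ e : {e : Fin T × Fin T // e ∈ E}, Real.exp (p.2 e (x e.1.1, x e.1.2) / ε)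

/-- Graph-structured cost tensor with finite (real) cost matrices. -/
def costR {T N : ℕ} (E : Finset (Fin T × Fin T))
    (Cm : Fin T × Fin T → Fin N → Fin N → ℝ) (x : Fin T → Fin N) : ℝ :=
  ∑ e ∈ E, Cm e (x e.1) (x e.2)

/-- The tensor `K(x) = exp(-C(x)/ε)`. -/
def KtensR {T N : ℕ} (ε : ℝ) (E : Finset (Fin T × Fin T))
    (Cm : Fin T × Fin T → Fin N → Fin N → ℝ) (x : Fin T → Fin N) : ℝ :=
  Real.exp (-(costR E Cm x) / ε)

/-- The dual objective `φ(λ,Λ) = -ε⟨K, U(λ,Λ)⟩ - ∑_t (g^{(t)})*(-λ_t)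
- ∑_{(t₁,t₂)∈E} (f^{(t₁,t₂)})*(-Λ_{t₁,t₂})`. -/
def dualObjR {T N : ℕ} (ε : ℝ) (E : Finset (Fin T × Fin T))
    (Cm : Fin T × Fin T → Fin N → Fin N → ℝ)
    (g : Fin T → (Fin N → ℝ) → EReal)
    (f : Fin T × Fin T → (Fin N × Fin N → ℝ) → EReal)
    (p : DVar T N E) : EReal :=
  -((ε * ∑ x : Fin T → Fin N, KtensR ε E Cm x * Utens ε p x : ℝ) : EReal)
    - ∑ t : Fin T, fconj (g t) (fun i => -(p.1 t i))
    - ∑ e : {e : Fin T × Fin T // e ∈ E}, fconj (f e.1) (fun q => -(p.2 e q))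

/-- A polyhedral set: a finite intersection of closed half-spaces. -/
def isPolyhedralSet {V : Type*} [AddCommGroup V] [Module ℝ V] (s : Set V) : Prop :=
  ∃ (k : ℕ) (a : Fin k → V →ₗ[ℝ] ℝ) (b : Fin k → ℝ), s = {x | ∀ i, a i x ≤ b i}

/-- Effective domain of an extended-real-valued function. -/
def edom {ι : Type*} (f : (ι → ℝ) → EReal) : Set (ι → ℝ) := {x | f x ≠ ⊤}

/-- A convex function is polyhedral if its epigraph is a polyhedral set. -/
def isPolyhedralFn {ι : Type*} (f : (ι → ℝ) → EReal) : Prop :=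
  isPolyhedralSet {p : (ι → ℝ) × ℝ | f p.1 ≤ ((p.2 : ℝ) : EReal)}



/-!
Fixing all dual variables but one block `z`, the dual objective is, up to an additive constant,
`z ↦ -ε ∑ᵢ cᵢ exp (zᵢ / ε) - h* (-z)`, where `cᵢ > 0` is the mass of `K ⊙ U` carried by the
entry `i` of the block (for an edge this needs `t₁ ≠ t₂`). This function is upper semicontinuous,
`h*` being a supremum of affine functions. By Fenchel–Young at a strictly positive point `μ` of
`dom h` it is bounded above by `h μ + ∑ᵢ (μᵢ zᵢ - ε cᵢ exp (zᵢ / ε))`, which tends to `-∞` away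
from compact sets; so it attains its maximum.
-/

open Set Topology

theorem UpperSemicontinuous.exists_forall_ge' {X β : Type*} [TopologicalSpace X] [LinearOrder β]
    {f : X → β} (hf : UpperSemicontinuous f) (x₀ : X) (h : ∀ᶠ x in cocompact X, f x ≤ f x₀) :
    ∃ x, ∀ y, f y ≤ f x := by
  obtain ⟨K, hK, hKf⟩ := mem_cocompact.1 h
  obtain ⟨x, hx, hmax⟩ := (hf.upperSemicontinuousOn _).exists_isMaxOn
    (insert_nonempty x₀ K) (hK.insert x₀)
  refine ⟨x, fun y => ?_⟩
  by_cases hy : y ∈ insert x₀ K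
  · exact hmax hy
  · exact (hKf fun hyK => hy (mem_insert_of_mem _ hyK)).trans (hmax (mem_insert _ _))

theorem UpperSemicontinuous.exists_forall_ge_of_tendsto_bot {X : Type*} [TopologicalSpace X]
    [Nonempty X] {f : X → EReal} (hf : UpperSemicontinuous f)
    (hlim : Tendsto f (cocompact X) (𝓝 ⊥)) : ∃ x, ∀ y, f y ≤ f x := by
  by_cases hbot : ∃ x₀, f x₀ ≠ ⊥
  · obtain ⟨x₀, hx₀⟩ := hbot
    obtain ⟨a, -, ha⟩ := EReal.lt_iff_exists_real_btwn.1 (bot_lt_iff_ne_bot.2 hx₀)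
    exact hf.exists_forall_ge' x₀
      ((EReal.tendsto_nhds_bot_iff_real.1 hlim a).mono fun x hx => (hx.trans ha).le)
  · push Not at hbot
    exact ⟨Classical.arbitrary X, fun y => (hbot y).trans_le bot_le⟩

theorem tendsto_sum_apply_cocompact_atBot {ι : Type*} [Fintype ι] {X : ι → Type*}
    [∀ i, TopologicalSpace (X i)] {φ : ∀ i, X i → ℝ} (hbdd : ∀ i, BddAbove (range (φ i)))
    (hφ : ∀ i, Tendsto (φ i) (cocompact (X i)) atBot) :
    Tendsto (fun x => ∑ i, φ i (x i)) (cocompact (∀ i, X i)) atBot := by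
  classical
  choose M hM using hbdd
  rw [← coprodᵢ_cocompact, Filter.coprodᵢ, tendsto_iSup]
  intro i
  have hle : ∀ x : ∀ i, X i, ∑ k, φ k (x k) ≤ φ i (x i) + ∑ k ∈ Finset.univ.erase i, M k :=
    fun x => by
      rw [← Finset.add_sum_erase _ _ (Finset.mem_univ i)]
      gcongr with k
      exact hM k (mem_range_self _)
  exact tendsto_atBot_mono hle
    (tendsto_atBot_add_const_right _ _ ((hφ i).comp tendsto_comap))

theorem tendsto_mul_sub_mul_exp_div_cocompact_atBot {a b ε : ℝ} (ha : 0 < a) (hb : 0 < b)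
    (hε : 0 < ε) : Tendsto (fun s => a * s - b * Real.exp (s / ε)) (cocompact ℝ) atBot := by
  rw [cocompact_eq_atBot_atTop, tendsto_sup]
  constructor
  · refine tendsto_atBot_mono (fun s => ?_) (tendsto_id.const_mul_atBot ha)
    have := mul_pos hb (Real.exp_pos (s / ε))
    simp only [id]
    linarith
  · -- `exp t ≥ t² / 2` beats the linear term
    refine tendsto_atBot_mono' _ ?_ tendsto_neg_atTop_atBot
    filter_upwards [eventually_ge_atTop (2 * ε ^ 2 * (a + 1) / b), eventually_ge_atTop 0]
      with s hs hs0
    have ht : 0 ≤ s / ε := div_nonneg hs0 hε.le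
    have hexp : b * ((s / ε) ^ 2 / 2) ≤ b * Real.exp (s / ε) := by
      have := Real.quadratic_le_exp_of_nonneg ht
      gcongr
      linarith
    have hquad : (a + 1) * s ≤ b * ((s / ε) ^ 2 / 2) := by
      rw [div_le_iff₀ hb] at hs
      rw [show b * ((s / ε) ^ 2 / 2) = b * s * s / (2 * ε ^ 2) by field_simp,
        le_div_iff₀ (by positivity)]
      nlinarith
    linarith

theorem EReal.continuous_coe_sub_const {α : Type*} [TopologicalSpace α] {f : α → ℝ}
    (hf : Continuous f) (c : EReal) : Continuous fun a => (f a : EReal) - c := by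
  induction c using EReal.rec with
  | bot => simpa [EReal.coe_sub_bot] using continuous_const
  | coe r => exact continuous_coe_real_ereal.comp (hf.sub continuous_const)
  | top => simpa [EReal.sub_top] using continuous_const

theorem EReal.sub_add_eq_sub_sub {x y z : EReal} (hy : y ≠ ⊥) (hz : z ≠ ⊥) :
    x - (y + z) = x - y - z := by
  simp only [sub_eq_add_neg, EReal.neg_add (Or.inl hy) (Or.inr hz), add_assoc]

theorem EReal.sum_ne_bot {α : Type*} {s : Finset α} {F : α → EReal} (h : ∀ a ∈ s, F a ≠ ⊥) :
    ∑ a ∈ s, F a ≠ ⊥ :=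
  Finset.sum_induction F (· ≠ ⊥) (fun _ _ ha hb => EReal.add_ne_bot_iff.2 ⟨ha, hb⟩)
    EReal.zero_ne_bot h

section Conjugate

variable {ι : Type*} [Fintype ι]

theorem le_fconj (h : (ι → ℝ) → EReal) (y x : ι → ℝ) :
    ((∑ i, y i * x i : ℝ) : EReal) - h x ≤ fconj h y :=
  le_iSup (fun x => ((∑ i, y i * x i : ℝ) : EReal) - h x) x

theorem fconj_ne_bot {h : (ι → ℝ) → EReal} (hdom : ∃ x, h x ≠ ⊤) (y : ι → ℝ) :
    fconj h y ≠ ⊥ := by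
  obtain ⟨x, hx⟩ := hdom
  refine ne_bot_of_le_ne_bot ?_ (le_fconj h y x)
  generalize h x = v at hx ⊢
  induction v using EReal.rec with
  | bot => simp
  | coe r => exact EReal.coe_ne_bot _
  | top => exact absurd rfl hx

theorem lowerSemicontinuous_fconj (h : (ι → ℝ) → EReal) : LowerSemicontinuous (fconj h) :=
  lowerSemicontinuous_iSup fun x =>
    (EReal.continuous_coe_sub_const (by fun_prop) (h x)).lowerSemicontinuous

end Conjugate

section BlockObjective

variable {ι : Type*} [Fintype ι]

def blockDualObj (ε : ℝ) (c : ι → ℝ) (h : (ι → ℝ) → EReal) (z : ι → ℝ) : EReal :=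
  -((ε * ∑ i, c i * Real.exp (z i / ε) : ℝ) : EReal) - fconj h (fun i => -(z i))

theorem upperSemicontinuous_blockDualObj (ε : ℝ) (c : ι → ℝ) (h : (ι → ℝ) → EReal) :
    UpperSemicontinuous (blockDualObj ε c h) := by
  have hexp : Continuous fun z : ι → ℝ =>
      ((-(ε * ∑ i, c i * Real.exp (z i / ε)) : ℝ) : EReal) :=
    continuous_coe_real_ereal.comp (by fun_prop)
  have hconj : UpperSemicontinuous fun z : ι → ℝ => -fconj h (fun i => -(z i)) :=
    continuous_neg.comp_lowerSemicontinuous_antitone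
      ((lowerSemicontinuous_fconj h).comp continuous_neg) EReal.neg_strictAnti.antitone
  have hsum := hexp.upperSemicontinuous.add' hconj fun z =>
    EReal.continuousAt_add (Or.inl (EReal.coe_ne_top _)) (Or.inl (EReal.coe_ne_bot _))
  convert hsum using 1
  funext z
  rw [blockDualObj, sub_eq_add_neg, EReal.coe_neg]

theorem blockDualObj_le {ε : ℝ} (c : ι → ℝ) {h : (ι → ℝ) → EReal} {μ : ι → ℝ} {m : ℝ}
    (hm : h μ = m) (z : ι → ℝ) :
    blockDualObj ε c h z
      ≤ ((m + ∑ i, (μ i * z i - ε * c i * Real.exp (z i / ε)) : ℝ) : EReal) := by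
  have hyoung := le_fconj h (fun i => -(z i)) μ
  rw [hm, ← EReal.coe_sub] at hyoung
  calc blockDualObj ε c h z
      ≤ -((ε * ∑ i, c i * Real.exp (z i / ε) : ℝ) : EReal)
          - ((∑ i, -(z i) * μ i - m : ℝ) : EReal) := EReal.sub_le_sub le_rfl hyoung
    _ = _ := by
      rw [← EReal.coe_neg, ← EReal.coe_sub, EReal.coe_eq_coe_iff, Finset.mul_sum]
      simp only [Finset.sum_sub_distrib, neg_mul, Finset.sum_neg_distrib, mul_comm (z _),
        mul_assoc]
      ring

theorem tendsto_blockDualObj_cocompact_bot {ε : ℝ} (hε : 0 < ε) {c : ι → ℝ}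
    (hc : ∀ i, 0 < c i) {h : (ι → ℝ) → EReal} {μ : ι → ℝ} (hμ : ∀ i, 0 < μ i) (hμ_bot : h μ ≠ ⊥)
    (hμ_top : h μ ≠ ⊤) : Tendsto (blockDualObj ε c h) (cocompact (ι → ℝ)) (𝓝 ⊥) := by
  have hφ i : Tendsto (fun s => μ i * s - ε * c i * Real.exp (s / ε)) (cocompact ℝ) atBot :=
    tendsto_mul_sub_mul_exp_div_cocompact_atBot (hμ i) (mul_pos hε (hc i)) hε
  have hbdd i : BddAbove (range fun s => μ i * s - ε * c i * Real.exp (s / ε)) := by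
    have hcont : Continuous fun s => μ i * s - ε * c i * Real.exp (s / ε) := by fun_prop
    obtain ⟨s, hs⟩ := hcont.exists_forall_ge (hφ i)
    exact ⟨_, forall_mem_range.2 hs⟩
  have hbound := tendsto_atBot_add_const_left _ (h μ).toReal
    (tendsto_sum_apply_cocompact_atBot hbdd hφ)
  refine EReal.tendsto_nhds_bot_iff_real.2 fun a => ?_
  filter_upwards [hbound.eventually_lt_atBot a] with z hz
  exact (blockDualObj_le c (EReal.coe_toReal hμ_top hμ_bot).symm z).trans_lt
    (EReal.coe_lt_coe_iff.2 hz)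

theorem exists_forall_ge_of_eq_blockDualObj_sub {ε : ℝ} (hε : 0 < ε) {c : ι → ℝ}
    (hc : ∀ i, 0 < c i) {h : (ι → ℝ) → EReal} {μ : ι → ℝ} (hμ : ∀ i, 0 < μ i)
    (hμ_bot : h μ ≠ ⊥) (hμ_top : h μ ≠ ⊤) {F : (ι → ℝ) → EReal} {C : EReal}
    (hF : ∀ z, F z = blockDualObj ε c h z - C) : ∃ z, ∀ z', F z' ≤ F z := by
  obtain ⟨z, hz⟩ := (upperSemicontinuous_blockDualObj ε c h).exists_forall_ge_of_tendsto_bot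
    (tendsto_blockDualObj_cocompact_bot hε hc hμ hμ_bot hμ_top)
  exact ⟨z, fun z' => by simpa only [hF] using EReal.sub_le_sub (hz z') le_rfl⟩

end BlockObjective

theorem sum_update_eq_add_sum_erase {α M : Type*} [Fintype α] [DecidableEq α] [AddCommMonoid M]
    {β : α → Type*} (F : ∀ a, β a → M) (v : ∀ a, β a) (a : α) (w : β a) :
    ∑ b, F b (Function.update v a w b) = F a w + ∑ b ∈ Finset.univ.erase a, F b (v b) := by
  rw [← Finset.add_sum_erase _ _ (Finset.mem_univ a), Function.update_self]
  congr 1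
  exact Finset.sum_congr rfl fun b hb => by
    rw [Function.update_of_ne (Finset.ne_of_mem_erase hb)]

section FiberSum

variable {X ι : Type*} [Fintype X] [DecidableEq ι]

def fiberSum (π : X → ι) (W : X → ℝ) (i : ι) : ℝ :=
  ∑ x with π x = i, W x

theorem sum_mul_comp_eq_sum_fiberSum_mul [Fintype ι] (π : X → ι) (W : X → ℝ) (e : ι → ℝ) :
    ∑ x, W x * e (π x) = ∑ i, fiberSum π W i * e i := by
  rw [← Finset.sum_fiberwise Finset.univ π]
  refine Finset.sum_congr rfl fun i _ => ?_
  rw [fiberSum, Finset.sum_mul]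
  exact Finset.sum_congr rfl fun x hx => by rw [(Finset.mem_filter.1 hx).2]

theorem fiberSum_pos {π : X → ι} (hπ : Function.Surjective π) {W : X → ℝ} (hW : ∀ x, 0 < W x)
    (i : ι) : 0 < fiberSum π W i := by
  obtain ⟨x, hx⟩ := hπ i
  exact Finset.sum_pos (fun x _ => hW x) ⟨x, by simp [hx]⟩

end FiberSum

section DualObjective

variable {T N : ℕ} {ε : ℝ} {E : Finset (Fin T × Fin T)}

theorem KtensR_mul_Utens_pos (Cm : Fin T × Fin T → Fin N → Fin N → ℝ) (p : DVar T N E)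
    (x : Fin T → Fin N) : 0 < KtensR ε E Cm x * Utens ε p x := by
  unfold KtensR Utens
  positivity

theorem Utens_update_vertex (p : DVar T N E) (j : Fin T) (l : Fin N → ℝ) (x : Fin T → Fin N) :
    Utens ε (Function.update p.1 j l, p.2) x
      = Utens ε (Function.update p.1 j 0, p.2) x * Real.exp (l (x j) / ε) := by
  have hfactor t : Real.exp (Function.update p.1 j l t (x t) / ε)
      = Real.exp (Function.update p.1 j 0 t (x t) / ε)
        * if t = j then Real.exp (l (x j) / ε) else 1 := by
    rcases eq_or_ne t j with rfl | ht <;> simp [*]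
  simp only [Utens, hfactor, Finset.prod_mul_distrib, Finset.prod_ite_eq', Finset.mem_univ,
    if_true]
  ring

theorem Utens_update_edge (p : DVar T N E) (e : {e : Fin T × Fin T // e ∈ E})
    (R : Fin N × Fin N → ℝ) (x : Fin T → Fin N) :
    Utens ε (p.1, Function.update p.2 e R) x
      = Utens ε (p.1, Function.update p.2 e 0) x * Real.exp (R (x e.1.1, x e.1.2) / ε) := by
  have hfactor e' : Real.exp (Function.update p.2 e R e' (x e'.1.1, x e'.1.2) / ε)
      = Real.exp (Function.update p.2 e 0 e' (x e'.1.1, x e'.1.2) / ε)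
        * if e' = e then Real.exp (R (x e.1.1, x e.1.2) / ε) else 1 := by
    rcases eq_or_ne e' e with rfl | he <;> simp [*]
  simp only [Utens, hfactor, Finset.prod_mul_distrib, Finset.prod_ite_eq', Finset.mem_univ,
    if_true]
  ring

variable {Cm : Fin T × Fin T → Fin N → Fin N → ℝ} {g : Fin T → (Fin N → ℝ) → EReal}
  {f : Fin T × Fin T → (Fin N × Fin N → ℝ) → EReal}

theorem exists_dualObjR_update_vertex_eq_blockDualObj_sub (hg : ∀ t y, fconj (g t) y ≠ ⊥)
    (hf : ∀ (e : {e : Fin T × Fin T // e ∈ E}) y, fconj (f e.1) y ≠ ⊥)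
    (j : Fin T) (p : DVar T N E) :
    ∃ c : Fin N → ℝ, (∀ i, 0 < c i) ∧ ∃ C : EReal, ∀ l,
      dualObjR ε E Cm g f (Function.update p.1 j l, p.2) = blockDualObj ε c (g j) l - C := by
  set W := fun x => KtensR ε E Cm x * Utens ε (Function.update p.1 j 0, p.2) x
  refine ⟨fiberSum (fun x => x j) W,
    fiberSum_pos (fun i => ⟨fun _ => i, rfl⟩) (KtensR_mul_Utens_pos Cm _),
    ∑ t ∈ Finset.univ.erase j, fconj (g t) (fun i => -p.1 t i)
      + ∑ e, fconj (f e.1) (fun q => -p.2 e q), fun l => ?_⟩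
  have hmass : ∑ x, KtensR ε E Cm x * Utens ε (Function.update p.1 j l, p.2) x
      = ∑ i, fiberSum (fun x => x j) W i * Real.exp (l i / ε) := by
    simp only [Utens_update_vertex p j l, ← mul_assoc]
    exact sum_mul_comp_eq_sum_fiberSum_mul (fun x => x j) W fun i => Real.exp (l i / ε)
  have hconj := sum_update_eq_add_sum_erase (fun t v => fconj (g t) fun i => -v i) p.1 j l
  beta_reduce at hconj
  rw [dualObjR, hmass, hconj,
    EReal.sub_add_eq_sub_sub (hg _ _) (EReal.sum_ne_bot fun _ _ => hg _ _),
    ← EReal.sub_add_eq_sub_sub (EReal.sum_ne_bot fun _ _ => hg _ _)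
      (EReal.sum_ne_bot fun _ _ => hf _ _)]
  rfl

theorem exists_dualObjR_update_edge_eq_blockDualObj_sub (hE : ∀ e ∈ E, e.1 ≠ e.2)
    (hg : ∀ t y, fconj (g t) y ≠ ⊥)
    (hf : ∀ (e : {e : Fin T × Fin T // e ∈ E}) y, fconj (f e.1) y ≠ ⊥)
    (e : {e : Fin T × Fin T // e ∈ E}) (p : DVar T N E) :
    ∃ c : Fin N × Fin N → ℝ, (∀ q, 0 < c q) ∧ ∃ C : EReal, ∀ R,
      dualObjR ε E Cm g f (p.1, Function.update p.2 e R)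
        = blockDualObj ε c (f e.1) R - C := by
  set π := fun x : Fin T → Fin N => (x e.1.1, x e.1.2)
  set W := fun x => KtensR ε E Cm x * Utens ε (p.1, Function.update p.2 e 0) x
  have hπ : Function.Surjective π := fun q =>
    ⟨fun t => if t = e.1.2 then q.2 else q.1, by simp [π, hE e.1 e.2]⟩
  refine ⟨fiberSum π W, fiberSum_pos hπ (KtensR_mul_Utens_pos Cm _),
    ∑ t, fconj (g t) (fun i => -p.1 t i)
      + ∑ e' ∈ Finset.univ.erase e, fconj (f e'.1) (fun q => -p.2 e' q), fun R => ?_⟩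
  have hmass : ∑ x, KtensR ε E Cm x * Utens ε (p.1, Function.update p.2 e R) x
      = ∑ q, fiberSum π W q * Real.exp (R q / ε) := by
    simp only [Utens_update_edge p e R, ← mul_assoc]
    exact sum_mul_comp_eq_sum_fiberSum_mul π W fun q => Real.exp (R q / ε)
  have hgsum := EReal.sum_ne_bot fun t (_ : t ∈ Finset.univ) => hg t fun i => -p.1 t i
  have hfsum := EReal.sum_ne_bot fun e' (_ : e' ∈ Finset.univ.erase e) =>
    hf e' fun q => -p.2 e' q
  have hconj := sum_update_eq_add_sum_erase (fun e' v => fconj (f e'.1) fun q => -v q) p.2 e R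
  beta_reduce at hconj
  rw [dualObjR, hmass, hconj,
    EReal.sub_add_eq_sub_sub (hf _ _) hfsum, ← EReal.sub_add_eq_sub_sub hgsum (hf _ _),
    add_comm, EReal.sub_add_eq_sub_sub (hf _ _) hgsum, ← EReal.sub_add_eq_sub_sub hgsum hfsum]
  rfl

end DualObjective

theorem block_coordinate_subproblems_attained_general
    (T N : ℕ) (ε : ℝ) (hε : 0 < ε)
    (E : Finset (Fin T × Fin T))
    (hE : ∀ e ∈ E, e.1 ≠ e.2)
    (Cm : Fin T × Fin T → Fin N → Fin N → ℝ)
    (g : Fin T → (Fin N → ℝ) → EReal)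
    (f : Fin T × Fin T → (Fin N × Fin N → ℝ) → EReal)
    (hg : ∀ t : Fin T, properFn (g t) ∧ convexFn (g t) ∧ LowerSemicontinuous (g t))
    (hf : ∀ e ∈ E, properFn (f e) ∧ convexFn (f e) ∧ LowerSemicontinuous (f e))
    -- Assumption 3
    (hA3g : ∀ j : Fin T, ∃ μ : Fin N → ℝ, (∀ i, 0 < μ i) ∧
      (isPolyhedralFn (g j) → μ ∈ edom (g j)) ∧
      (¬ isPolyhedralFn (g j) → μ ∈ intrinsicInterior ℝ (edom (g j))))
    (hA3f : ∀ e ∈ E, ∃ R : Fin N × Fin N → ℝ, (∀ q, 0 < R q) ∧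
      (isPolyhedralFn (f e) → R ∈ edom (f e)) ∧
      (¬ isPolyhedralFn (f e) → R ∈ intrinsicInterior ℝ (edom (f e)))) :
    (∀ j : Fin T, ∀ p : DVar T N E, ∃ lj : Fin N → ℝ,
      ∀ l' : Fin N → ℝ,
        dualObjR ε E Cm g f (Function.update p.1 j l', p.2)
          ≤ dualObjR ε E Cm g f (Function.update p.1 j lj, p.2)) ∧
    (∀ e : {e : Fin T × Fin T // e ∈ E}, ∀ p : DVar T N E, ∃ Re : Fin N × Fin N → ℝ,
      ∀ R' : Fin N × Fin N → ℝ,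
        dualObjR ε E Cm g f (p.1, Function.update p.2 e R')
          ≤ dualObjR ε E Cm g f (p.1, Function.update p.2 e Re)) := by
  have hg_conj t : ∀ y, fconj (g t) y ≠ ⊥ := fconj_ne_bot (hg t).1.2
  have hf_conj (e : {e : Fin T × Fin T // e ∈ E}) : ∀ y, fconj (f e.1) y ≠ ⊥ :=
    fconj_ne_bot (hf e.1 e.2).1.2
  refine ⟨fun j p => ?_, fun e p => ?_⟩
  · obtain ⟨c, hc, C, hC⟩ :=
      exists_dualObjR_update_vertex_eq_blockDualObj_sub (Cm := Cm) hg_conj hf_conj j p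
    obtain ⟨μ, hμ, hμ_dom⟩ := hA3g j
    exact exists_forall_ge_of_eq_blockDualObj_sub hε hc hμ ((hg j).1.1 μ)
      ((em _).elim hμ_dom.1 fun hp => intrinsicInterior_subset (hμ_dom.2 hp)) hC
  · obtain ⟨c, hc, C, hC⟩ :=
      exists_dualObjR_update_edge_eq_blockDualObj_sub (Cm := Cm) hE hg_conj hf_conj e p
    obtain ⟨R, hR, hR_dom⟩ := hA3f e.1 e.2
    exact exists_forall_ge_of_eq_blockDualObj_sub hε hc hR ((hf e.1 e.2).1.1 R)
      ((em _).elim hR_dom.1 fun hp => intrinsicInterior_subset (hR_dom.2 hp)) hC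

/-- Under Assumptions 1 and 3, every block-coordinate subproblem of
the dual has a nonempty set of maximizers. -/
theorem block_coordinate_subproblems_attained
    (T N : ℕ) (ε : ℝ) (hε : 0 < ε)
    (E : Finset (Fin T × Fin T))
    (hE : ∀ e ∈ E, e.1 ≠ e.2)
    (hconn : (SimpleGraph.fromRel (fun a b : Fin T => (a, b) ∈ E)).Connected)
    (Cm : Fin T × Fin T → Fin N → Fin N → ℝ)
    (g : Fin T → (Fin N → ℝ) → EReal)
    (f : Fin T × Fin T → (Fin N × Fin N → ℝ) → EReal)
    (hg : ∀ t : Fin T, properFn (g t) ∧ convexFn (g t) ∧ LowerSemicontinuous (g t))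
    (hf : ∀ e ∈ E, properFn (f e) ∧ convexFn (f e) ∧ LowerSemicontinuous (f e))
    -- Assumption 3
    (hA3g : ∀ j : Fin T, ∃ μ : Fin N → ℝ, (∀ i, 0 < μ i) ∧
      (isPolyhedralFn (g j) → μ ∈ edom (g j)) ∧
      (¬ isPolyhedralFn (g j) → μ ∈ intrinsicInterior ℝ (edom (g j))))
    (hA3f : ∀ e ∈ E, ∃ R : Fin N × Fin N → ℝ, (∀ q, 0 < R q) ∧
      (isPolyhedralFn (f e) → R ∈ edom (f e)) ∧
      (¬ isPolyhedralFn (f e) → R ∈ intrinsicInterior ℝ (edom (f e))))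
    -- Assumption 1 (feasibility; `⟨C,M⟩ < ∞` holds automatically, the cost being real)
    (hfeas : ∃ M : Tens T N, (∀ x, 0 ≤ M x) ∧
      (∀ t : Fin T, g t (tproj t M) ≠ ⊤) ∧
      (∀ e ∈ E, f e (tbiproj e.1 e.2 M) ≠ ⊤)) :
    (∀ j : Fin T, ∀ p : DVar T N E, ∃ lj : Fin N → ℝ,
      ∀ l' : Fin N → ℝ,
        dualObjR ε E Cm g f (Function.update p.1 j l', p.2)
          ≤ dualObjR ε E Cm g f (Function.update p.1 j lj, p.2)) ∧
    (∀ e : {e : Fin T × Fin T // e ∈ E}, ∀ p : DVar T N E, ∃ Re : Fin N × Fin N → ℝ,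
      ∀ R' : Fin N × Fin N → ℝ,
        dualObjR ε E Cm g f (p.1, Function.update p.2 e R')
          ≤ dualObjR ε E Cm g f (p.1, Function.update p.2 e Re)) :=
  block_coordinate_subproblems_attained_general T N ε hε E hE Cm g f hg hf hA3g hA3f
end
end

section
/- Fix ε > 0, a cost tensor C with values in ℝ ∪ {+∞}, vectors λ_t ∈ ℝ^N (t ∈ V), and matrices Λ_{t1,t2} ∈ ℝ^{N×N} ((t1,t2) ∈ E), and define 𝓛(M) = ⟨C,M⟩ + εD(M) − Σ_{t∈V} λ_t^T P_t(M) − Σ_{(t1,t2)∈E} tr(Λ_{t1,t2}^T P_{t1,t2}(M)) for nonnegative tensors M. Then the infimum of 𝓛 over all nonnegative 𝒯-mode tensors M of side N equals −ε⟨K, U(λ,Λ)⟩ + N^𝒯·ε, and it is attained at M = K ⊙ U(λ,Λ) (elementwise product). -/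
/-! The Lagrangian separates over the entries `x` of the tensor: with the total dual potential
`a(x) = ∑ₜ λₜ(xₜ) + ∑ₑ Λₑ(x_{e₁}, x_{e₂})`, the entry `m = M x` contributes
`C x · m + ε (m log m - m + 1) - a(x) m`. For finite `C x`, Fenchel–Young for the conjugate pair
`m ↦ m log m - m` and `exp` bounds this below by `ε - ε exp((a(x) - C x)/ε)`, with equality at
`m = exp((a(x) - C x)/ε) = K x U x`; for `C x = +∞` the minimum `ε` is attained at `m = 0 = K x U x`.
Summing over the `N^𝒯` entries gives the claim. -/

open scoped BigOperators
open Filter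

noncomputable section

/-- `⟨C, M⟩` (in `EReal`, where `0 · ⊤ = 0`). -/
def einner {T N : ℕ} (C : (Fin T → Fin N) → EReal) (M : Tens T N) : EReal :=
  ∑ x : Fin T → Fin N, C x * ((M x : ℝ) : EReal)

/-- `exp(-c/ε)` with the convention `exp(-∞) = 0`. -/
def expNegE (ε : ℝ) (c : EReal) : ℝ :=
  if c = ⊤ then 0 else Real.exp (-c.toReal / ε)

theorem EReal.coe_sum {α : Type*} (s : Finset α) (f : α → ℝ) :
    ((∑ x ∈ s, f x : ℝ) : EReal) = ∑ x ∈ s, (f x : EReal) :=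
  map_sum (⟨⟨Real.toEReal, EReal.coe_zero⟩, EReal.coe_add⟩ : ℝ →+ EReal) f s

theorem EReal.add_coe_sub_coe (X : EReal) (p q : ℝ) : X + p - q = X + ((p - q : ℝ) : EReal) := by
  rw [sub_eq_add_neg, sub_eq_add_neg, add_assoc, ← EReal.coe_neg, ← EReal.coe_add]

theorem sum_mul_sum_ite_eq {α β : Type*} [Fintype α] [Fintype β] [DecidableEq β]
    (f : α → β) (g : β → ℝ) (M : α → ℝ) :
    ∑ b, g b * ∑ x, (if f x = b then M x else 0) = ∑ x, g (f x) * M x := by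
  simp_rw [Finset.mul_sum, mul_ite, mul_zero]
  rw [Finset.sum_comm]
  simp

theorem sum_mul_tproj {T N : ℕ} (t : Fin T) (μ : Fin N → ℝ) (M : Tens T N) :
    ∑ i, μ i * tproj t M i = ∑ x, μ (x t) * M x :=
  sum_mul_sum_ite_eq (fun x : Fin T → Fin N => x t) μ M

theorem sum_mul_tbiproj {T N : ℕ} (t₁ t₂ : Fin T) (Λ : Fin N × Fin N → ℝ) (M : Tens T N) :
    ∑ i, ∑ k, Λ (i, k) * tbiproj t₁ t₂ M (i, k) = ∑ x, Λ (x t₁, x t₂) * M x := by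
  calc ∑ i, ∑ k, Λ (i, k) * tbiproj t₁ t₂ M (i, k) = ∑ p, Λ p * tbiproj t₁ t₂ M p :=
        (Fintype.sum_prod_type fun p => Λ p * tbiproj t₁ t₂ M p).symm
    _ = ∑ x, Λ (x t₁, x t₂) * M x := by
        simpa only [tbiproj, Prod.ext_iff] using
          sum_mul_sum_ite_eq (fun x : Fin T → Fin N => (x t₁, x t₂)) Λ M

theorem expNegE_nonneg (ε : ℝ) (c : EReal) : 0 ≤ expNegE ε c := by
  unfold expNegE
  split_ifs
  exacts [le_rfl, (Real.exp_pos _).le]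

/-- Fenchel–Young inequality for the conjugate pair `m ↦ m log m - m` and `exp`. -/
theorem mul_one_add_sub_log_le_exp (b : ℝ) {m : ℝ} (hm : 0 ≤ m) :
    m * (1 + b - Real.log m) ≤ Real.exp b := by
  rcases hm.eq_or_lt with rfl | hm
  · simp [(Real.exp_pos b).le]
  · calc m * (1 + b - Real.log m) ≤ m * Real.exp (b - Real.log m) := by
          gcongr; linarith [Real.add_one_le_exp (b - Real.log m)]
      _ = Real.exp b := by rw [Real.exp_sub, Real.exp_log hm, mul_div_cancel₀ _ hm.ne']

def entryLagrangian (ε : ℝ) (c : EReal) (a m : ℝ) : EReal :=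
  c * (m : EReal) + ((ε * (m * Real.log m - m + 1) - a * m : ℝ) : EReal)

def gibbsWeight (ε : ℝ) (c : EReal) (a : ℝ) : ℝ :=
  expNegE ε c * Real.exp (a / ε)

theorem gibbsWeight_coe (ε r a : ℝ) :
    gibbsWeight ε r a = Real.exp ((a - r) / ε) := by
  rw [gibbsWeight, expNegE, if_neg (EReal.coe_ne_top r), EReal.toReal_coe, ← Real.exp_add]
  ring_nf

theorem gibbsWeight_nonneg (ε : ℝ) (c : EReal) (a : ℝ) : 0 ≤ gibbsWeight ε c a :=
  mul_nonneg (expNegE_nonneg ε c) (Real.exp_pos _).le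

section

variable {ε : ℝ} (hε : 0 < ε) {c : EReal} (hc : c ≠ ⊥) (a : ℝ)
include hε hc

theorem entryLagrangian_ge {m : ℝ} (hm : 0 ≤ m) :
    ((-(ε * gibbsWeight ε c a) + ε : ℝ) : EReal) ≤ entryLagrangian ε c a m := by
  induction c using EReal.rec with
  | bot => exact absurd rfl hc
  | top =>
    rw [entryLagrangian, gibbsWeight, expNegE, if_pos rfl]
    rcases hm.eq_or_lt with rfl | hm
    · simp
    · rw [EReal.top_mul_coe_of_pos hm, EReal.top_add_coe]
      exact le_top
  | coe r =>
    rw [entryLagrangian, gibbsWeight_coe, ← EReal.coe_mul, ← EReal.coe_add, EReal.coe_le_coe_iff]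
    have hb : a - r = ε * ((a - r) / ε) := (mul_div_cancel₀ _ hε.ne').symm
    nlinarith [mul_le_mul_of_nonneg_left (mul_one_add_sub_log_le_exp ((a - r) / ε) hm) hε.le]

theorem entryLagrangian_gibbsWeight :
    entryLagrangian ε c a (gibbsWeight ε c a) = ((-(ε * gibbsWeight ε c a) + ε : ℝ) : EReal) := by
  induction c using EReal.rec with
  | bot => exact absurd rfl hc
  | top => simp [entryLagrangian, gibbsWeight, expNegE]
  | coe r =>
    rw [entryLagrangian, gibbsWeight_coe, ← EReal.coe_mul, ← EReal.coe_add, Real.log_exp]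
    congr 1
    field_simp
    ring

end

/-- The infimum of the inner Lagrangian
`𝓛(M) = ⟨C,M⟩ + εD(M) - ∑_t λ_tᵀ P_t(M) - ∑_{(t₁,t₂)∈E} tr(Λ_{t₁,t₂}ᵀ P_{t₁,t₂}(M))`
over nonnegative tensors equals `-ε⟨K, U(λ,Λ)⟩ + N^𝒯ε`, attained at `M = K ⊙ U(λ,Λ)`. -/
theorem inner_lagrangian_infimum
    (T N : ℕ) (ε : ℝ) (hε : 0 < ε)
    (E : Finset (Fin T × Fin T))
    (C : (Fin T → Fin N) → EReal) (hC : ∀ x, C x ≠ ⊥)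
    (lam : Fin T → Fin N → ℝ) (Lam : Fin T × Fin T → Fin N × Fin N → ℝ)
    (K U : Tens T N)
    (hK : ∀ x, K x = expNegE ε (C x))
    (hU : ∀ x, U x = (∏ t : Fin T, Real.exp (lam t (x t) / ε)) *
      ∏ e ∈ E, Real.exp (Lam e (x e.1, x e.2) / ε))
    (𝓛 : Tens T N → EReal)
    (h𝓛 : ∀ M, 𝓛 M = einner C M + ((ε * entropy M : ℝ) : EReal)
      - (((∑ t : Fin T, ∑ i : Fin N, lam t i * tproj t M i) : ℝ) : EReal)
      - (((∑ e ∈ E, ∑ i : Fin N, ∑ k : Fin N,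
            Lam e (i, k) * tbiproj e.1 e.2 M (i, k)) : ℝ) : EReal)) :
    (∀ M : Tens T N, (∀ x, 0 ≤ M x) →
      (((-(ε * ∑ x : Fin T → Fin N, K x * U x) + (N : ℝ) ^ T * ε : ℝ)) : EReal) ≤ 𝓛 M) ∧
    (∀ x, 0 ≤ K x * U x) ∧
    𝓛 (fun x => K x * U x)
      = (((-(ε * ∑ x : Fin T → Fin N, K x * U x) + (N : ℝ) ^ T * ε : ℝ)) : EReal) := by
  set A : (Fin T → Fin N) → ℝ := fun x => ∑ t, lam t (x t) + ∑ e ∈ E, Lam e (x e.1, x e.2)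
  have hKU : ∀ x, K x * U x = gibbsWeight ε (C x) (A x) := fun x => by
    rw [hK, hU, gibbsWeight, ← Real.exp_sum, ← Real.exp_sum, ← Real.exp_add, add_div,
      Finset.sum_div, Finset.sum_div]
  have h𝓛_sum : ∀ M, 𝓛 M = ∑ x, entryLagrangian ε (C x) (A x) (M x) := fun M => by
    simp only [h𝓛, sum_mul_tproj, sum_mul_tbiproj, EReal.add_coe_sub_coe, einner, entropy,
      entryLagrangian]
    rw [Finset.sum_comm (γ := Fin T), Finset.sum_comm (γ := Fin T × Fin T), Finset.mul_sum,
      ← Finset.sum_sub_distrib, ← Finset.sum_sub_distrib, EReal.coe_sum, ← Finset.sum_add_distrib]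
    congr! 3
    simp only [A, add_mul, Finset.sum_mul]
    ring
  have hvalue : (((-(ε * ∑ x, K x * U x) + (N : ℝ) ^ T * ε : ℝ)) : EReal)
      = ∑ x : Fin T → Fin N, ((-(ε * gibbsWeight ε (C x) (A x)) + ε : ℝ) : EReal) := by
    rw [← EReal.coe_sum]
    simp [Finset.sum_add_distrib, Finset.mul_sum, hKU]
  refine ⟨fun M hM => ?_, fun x => hKU x ▸ gibbsWeight_nonneg _ _ _, ?_⟩
  · rw [h𝓛_sum, hvalue]
    exact Finset.sum_le_sum fun x _ => entryLagrangian_ge hε (hC x) (A x) (hM x)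
  · rw [h𝓛_sum, hvalue]
    exact Finset.sum_congr rfl fun x _ => by
      simpa only [hKU] using entryLagrangian_gibbsWeight hε (hC x) (A x)
end
end

section
/- Let ε > 0, let C ∈ (ℝ ∪ {+∞})^{N×N} and set K = exp(−C/ε) elementwise (with exp(−∞) = 0). Define the 𝒯-mode tensors K̂ and Û of side N by K̂(i_1,…,i_𝒯) = Π_{t=1}^{𝒯−1} K_{i_t, i_{t+1}} and Û(i_1,…,i_𝒯) = U_{i_1, i_𝒯} · Π_{t=2}^{𝒯−1} u_t^{(i_t)}, where U ∈ ℝ^{N×N} and u_2,…,u_{𝒯−1} ∈ ℝ^N. Define matrices Ψ̂_2 = K, Ψ̂_j = Ψ̂_{j−1} diag(u_{j−1}) K for j = 3,…,𝒯, and Ψ_{𝒯−1} = K, Ψ_j = K diag(u_{j+1}) Ψ_{j+1} for j = 1,…,𝒯−2. Then the projections of the tensor K̂ ⊙ Û (elementwise product) satisfy P_{1,𝒯}(K̂ ⊙ Û) = U ⊙ Ψ_1 and, for every j = 2,…,𝒯−1, P_j(K̂ ⊙ Û) = u_j ⊙ ((Ψ̂_j^T ⊙ (Ψ_j U^T)) 𝟏),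 where 𝟏 ∈ ℝ^N is the all-ones vector, ⊙ denotes elementwise product, and matrix products are ordinary. -/
open scoped BigOperators
open Filter Matrix

noncomputable section

/-!
Up to the factor `U (x 0) (x m)`, the entry of `K̂ ⊙ Û` at `x` is the weight `∏ₜ Aₜ (xₜ) (xₜ₊₁)` of
the path `x` through the chain of matrices `A₀ = K`, `Aₜ = diag(uₜ) K`. Summing path weights with
the two ends and one intermediate vertex `x j = i` pinned gives `(A₀ ⋯ Aⱼ₋₁) a i * (Aⱼ ⋯ Aₘ₋₁) i b`
(transfer matrices), and the two recursions say exactly that `Ψ̂ⱼ = A₀ ⋯ Aⱼ₋₁`, `Ψ₀ = A₀ ⋯ Aₘ₋₁`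
and `diag(uⱼ) Ψⱼ = Aⱼ ⋯ Aₘ₋₁` for `0 < j < m`.
-/

section PathSums

variable {R ι : Type*} [CommSemiring R]

def pathWeight {n : ℕ} (A : Fin n → Matrix ι ι R) (x : Fin (n + 1) → ι) : R :=
  ∏ t : Fin n, A t (x t.castSucc) (x t.succ)

lemma pathWeight_cons {n : ℕ} (A : Fin (n + 1) → Matrix ι ι R) (c : ι) (y : Fin (n + 1) → ι) :
    pathWeight A (Fin.cons c y) = A 0 c (y 0) * pathWeight (Fin.tail A) y := by
  simp only [pathWeight, Fin.prod_univ_succ, ← Fin.succ_castSucc, Fin.cons_succ, Fin.cons_zero,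
    Fin.castSucc_zero, Fin.tail]

variable [Fintype ι]

lemma sum_pi_fin_succ {M : Type*} [AddCommMonoid M] {n : ℕ} (f : (Fin (n + 1) → ι) → M) :
    ∑ x, f x = ∑ c, ∑ y, f (Fin.cons c y) := by
  rw [← (Fin.consEquiv fun _ => ι).sum_comp, Fintype.sum_prod_type]
  rfl

variable [DecidableEq ι]

lemma sum_ite_pathWeight_cons {n : ℕ} (A : Fin (n + 1) → Matrix ι ι R) (a : ι)
    (Q : (Fin (n + 1) → ι) → Prop) [DecidablePred Q] :
    ∑ x : Fin (n + 2) → ι, (if x 0 = a ∧ Q (Fin.tail x) then pathWeight A x else 0)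
      = ∑ d, A 0 a d *
          ∑ y : Fin (n + 1) → ι, if y 0 = d ∧ Q y then pathWeight (Fin.tail A) y else 0 := by
  simp only [sum_pi_fin_succ (n := n + 1), Fin.cons_zero, Fin.tail_cons, pathWeight_cons,
    ite_and, Finset.mul_sum]
  rw [Finset.sum_comm, Finset.sum_comm (γ := ι)]
  simp only [Finset.sum_ite_eq', Finset.sum_ite_eq, Finset.mem_univ, if_true, mul_ite, mul_zero]

lemma sum_ite_pathWeight_ends {n : ℕ} (A : Fin n → Matrix ι ι R) (a b : ι) :
    ∑ x : Fin (n + 1) → ι, (if x 0 = a ∧ x (Fin.last n) = b then pathWeight A x else 0)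
      = (List.ofFn A).prod a b := by
  induction n generalizing a with
  | zero =>
    rw [sum_pi_fin_succ]
    simp only [pathWeight, Finset.univ_eq_empty, Finset.prod_empty, Fin.last_zero, Fin.cons_zero,
      ite_and, Finset.sum_const, Finset.card_univ, Fintype.card_unique, one_smul,
      Finset.sum_ite_eq', Finset.mem_univ, if_true, List.ofFn_zero, List.prod_nil,
      one_apply]
  | succ n ih =>
    have peel := sum_ite_pathWeight_cons A a (fun y => y (Fin.last n) = b)
    simp only [Fin.tail, Fin.succ_last, Nat.succ_eq_add_one] at peel
    refine peel.trans ?_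
    simp only [ih, List.ofFn_succ, List.prod_cons, mul_apply]
    rfl

lemma sum_ite_pathWeight_pinned_zero {n : ℕ} (A : Fin n → Matrix ι ι R) (a i b : ι) :
    ∑ x : Fin (n + 1) → ι, (if x 0 = a ∧ x 0 = i ∧ x (Fin.last n) = b then pathWeight A x else 0)
      = (1 : Matrix ι ι R) a i * (List.ofFn A).prod i b := by
  by_cases hai : a = i
  · subst hai
    simp only [and_self_left, sum_ite_pathWeight_ends, one_apply_eq, one_mul]
  · rw [one_apply_ne hai, zero_mul]
    exact Finset.sum_eq_zero fun x _ => if_neg fun hx => hai (hx.1.symm.trans hx.2.1)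

theorem sum_ite_pathWeight_pinned {n : ℕ} (A : Fin n → Matrix ι ι R) (j : Fin (n + 1)) (a i b : ι) :
    ∑ x : Fin (n + 1) → ι, (if x 0 = a ∧ x j = i ∧ x (Fin.last n) = b then pathWeight A x else 0)
      = ((List.ofFn A).take j).prod a i * ((List.ofFn A).drop j).prod i b := by
  induction n generalizing a with
  | zero =>
    obtain rfl : j = 0 := Fin.fin_one_eq_zero j
    exact sum_ite_pathWeight_pinned_zero A a i b
  | succ n ih =>
    cases j using Fin.cases with
    | zero => exact sum_ite_pathWeight_pinned_zero A a i b
    | succ j =>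
      have peel := sum_ite_pathWeight_cons A a (fun y => y j = i ∧ y (Fin.last n) = b)
      simp only [Fin.tail, Fin.succ_last, Nat.succ_eq_add_one] at peel
      refine peel.trans ?_
      simp only [ih, Fin.val_succ, List.ofFn_succ, List.take_succ_cons, List.drop_succ_cons,
        List.prod_cons, mul_apply, Finset.sum_mul, mul_assoc]
      rfl

lemma sum_eq_sum_sum_ite_ends {M : Type*} [AddCommMonoid M] {n : ℕ}
    (f : (Fin (n + 1) → ι) → M) :
    ∑ x, f x
      = ∑ a, ∑ b, ∑ x : Fin (n + 1) → ι, if x 0 = a ∧ x (Fin.last n) = b then f x else 0 := by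
  rw [← Finset.sum_fiberwise Finset.univ (fun x => (x 0, x (Fin.last n))) f, Fintype.sum_prod_type]
  simp only [Finset.sum_filter, Prod.ext_iff]

lemma sum_ite_mul_pathWeight {n : ℕ} (g : ι → ι → R) (A : Fin n → Matrix ι ι R)
    (j : Fin (n + 1)) (i : ι) :
    ∑ x : Fin (n + 1) → ι, (if x j = i then g (x 0) (x (Fin.last n)) * pathWeight A x else 0)
      = ∑ a, ∑ b, g a b *
          (((List.ofFn A).take j).prod a i * ((List.ofFn A).drop j).prod i b) := by
  rw [sum_eq_sum_sum_ite_ends]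
  refine Fintype.sum_congr _ _ fun a => Fintype.sum_congr _ _ fun b => ?_
  rw [← sum_ite_pathWeight_pinned, Finset.mul_sum]
  refine Fintype.sum_congr _ _ fun x => ?_
  by_cases hx : x 0 = a ∧ x (Fin.last n) = b
  · obtain ⟨rfl, rfl⟩ := hx
    simp only [true_and, and_true, if_true, mul_ite, mul_zero]
  · rw [if_neg hx, if_neg fun h => hx ⟨h.1, h.2.2⟩, mul_zero]

end PathSums

section PathGraph

variable {R ι : Type*} [CommSemiring R] [Fintype ι] [DecidableEq ι]

def pathFactors (K : Matrix ι ι R) (u : ℕ → ι → R) (m : ℕ) : Fin m → Matrix ι ι R :=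
  fun t => diagonal (fun i => if 0 < (t : ℕ) then u t i else 1) * K

variable (K : Matrix ι ι R) (u : ℕ → ι → R) {m : ℕ}

lemma pathFactors_zero (h : 0 < m) : pathFactors K u m ⟨0, h⟩ = K := by
  simp [pathFactors]

lemma pathFactors_of_pos {t : ℕ} (h : t < m) (ht : 0 < t) :
    pathFactors K u m ⟨t, h⟩ = diagonal (u t) * K := by
  simp [pathFactors, ht]

lemma pathWeight_pathFactors (x : Fin (m + 1) → ι) :
    pathWeight (pathFactors K u m) x = (∏ t : Fin m, K (x t.castSucc) (x t.succ)) *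
      ∏ t : Fin (m + 1), (if 0 < (t : ℕ) ∧ (t : ℕ) < m then u t (x t) else 1) := by
  simp only [Fin.prod_univ_castSucc (n := m), Fin.val_last, lt_irrefl, and_false, if_false,
    mul_one, Fin.val_castSucc, Fin.is_lt, and_true, ← Finset.prod_mul_distrib, pathWeight,
    pathFactors, diagonal_mul]
  exact Fintype.prod_congr _ _ fun t => mul_comm _ _

lemma prod_take_ofFn_pathFactors (hatPsi : ℕ → Matrix ι ι R) (hhat1 : hatPsi 1 = K)
    (hhatrec : ∀ j : ℕ, 2 ≤ j → j ≤ m → hatPsi j = hatPsi (j - 1) * diagonal (u (j - 1)) * K)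
    {j : ℕ} (hj : 1 ≤ j) (hjm : j ≤ m) :
    ((List.ofFn (pathFactors K u m)).take j).prod = hatPsi j := by
  induction j, hj using Nat.le_induction with
  | base =>
    rw [List.prod_take_succ _ 0 (by rw [List.length_ofFn]; omega), List.getElem_ofFn,
      pathFactors_zero, List.take_zero, List.prod_nil, one_mul, hhat1]
  | succ j hj ih =>
    rw [List.prod_take_succ _ j (by rw [List.length_ofFn]; omega), List.getElem_ofFn,
      pathFactors_of_pos K u _ (by omega), ih (by omega), hhatrec (j + 1) (by omega) hjm,
      Nat.add_sub_cancel, mul_assoc]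

lemma prod_drop_ofFn_pathFactors (Psi : ℕ → Matrix ι ι R) (hpsiLast : Psi (m - 1) = K)
    (hpsirec : ∀ j : ℕ, j + 2 ≤ m → Psi j = K * diagonal (u (j + 1)) * Psi (j + 1))
    {j : ℕ} (hj : j < m) :
    ((List.ofFn (pathFactors K u m)).drop j).prod
      = diagonal (fun i => if 0 < j then u j i else 1) * Psi j := by
  have hm : 0 < m := by omega
  induction Nat.le_sub_one_of_lt hj using Nat.decreasingInduction with
  | self =>
    rw [List.drop_eq_getElem_cons (by rw [List.length_ofFn]; omega), List.prod_cons,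
      List.getElem_ofFn, List.drop_eq_nil_of_le (by rw [List.length_ofFn]; omega), List.prod_nil,
      mul_one, hpsiLast]
    rfl
  | of_succ k hk ih =>
    rw [List.drop_eq_getElem_cons (by rw [List.length_ofFn]; omega), List.prod_cons,
      ih (by omega), List.getElem_ofFn, hpsirec k (by omega)]
    simp only [pathFactors, Nat.succ_pos, if_true, mul_assoc]

end PathGraph

-- Modes are indexed `0, …, m` (so `𝒯 = m + 1`): `u j`, `hatPsi j`, `Psi j` are the paper's
-- `u_{j+1}`, `Ψ̂_{j+1}`, `Ψ_{j+1}`.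
theorem path_graph_projections_general
    (N m : ℕ) (hm : 2 ≤ m)
    (K : Matrix (Fin N) (Fin N) ℝ)
    (U : Matrix (Fin N) (Fin N) ℝ) (u : ℕ → Fin N → ℝ)
    (Khat Uhat : (Fin (m + 1) → Fin N) → ℝ)
    (hKhat : ∀ x, Khat x = ∏ t : Fin m, K (x t.castSucc) (x t.succ))
    (hUhat : ∀ x, Uhat x = U (x 0) (x (Fin.last m)) *
      ∏ t : Fin (m + 1), (if 0 < (t : ℕ) ∧ (t : ℕ) < m then u (t : ℕ) (x t) else 1))
    (hatPsi Psi : ℕ → Matrix (Fin N) (Fin N) ℝ)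
    (hhat1 : hatPsi 1 = K)
    (hhatrec : ∀ j : ℕ, 2 ≤ j → j ≤ m →
      hatPsi j = hatPsi (j - 1) * Matrix.diagonal (u (j - 1)) * K)
    (hpsiLast : Psi (m - 1) = K)
    (hpsirec : ∀ j : ℕ, j + 2 ≤ m →
      Psi j = K * Matrix.diagonal (u (j + 1)) * Psi (j + 1)) :
    (tbiproj (0 : Fin (m + 1)) (Fin.last m) (fun x => Khat x * Uhat x)
        = fun p => U p.1 p.2 * Psi 0 p.1 p.2) ∧
    ∀ j : Fin (m + 1), 0 < (j : ℕ) → (j : ℕ) < m →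
      tproj j (fun x => Khat x * Uhat x)
        = fun i => u (j : ℕ) i *
            ((((hatPsi (j : ℕ))ᵀ.hadamard (Psi (j : ℕ) * Uᵀ)).mulVec
              (fun _ => (1 : ℝ))) i) := by
  set A := pathFactors K u m
  have hM : ∀ x, Khat x * Uhat x = U (x 0) (x (Fin.last m)) * pathWeight A x := fun x => by
    rw [hKhat, hUhat, pathWeight_pathFactors]
    ring
  refine ⟨?_, fun j hj0 hjm => ?_⟩
  · funext ⟨a, b⟩
    have hPsi0 : (List.ofFn A).prod = Psi 0 := by
      simpa using prod_drop_ofFn_pathFactors K u Psi hpsiLast hpsirec (j := 0) (by omega)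
    calc ∑ x, (if x 0 = a ∧ x (Fin.last m) = b then Khat x * Uhat x else 0)
        = U a b * ∑ x, if x 0 = a ∧ x (Fin.last m) = b then pathWeight A x else 0 := by
          rw [Finset.mul_sum]
          refine Fintype.sum_congr _ _ fun x => ?_
          split_ifs with hx
          · rw [hM, hx.1, hx.2]
          · rw [mul_zero]
      _ = U a b * Psi 0 a b := by rw [sum_ite_pathWeight_ends, hPsi0]
  · funext i
    have hhat := prod_take_ofFn_pathFactors K u hatPsi hhat1 hhatrec (j := j) hj0 hjm.le
    have hpsi := prod_drop_ofFn_pathFactors K u Psi hpsiLast hpsirec hjm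
    simp only [tproj, hM]
    rw [sum_ite_mul_pathWeight U A j i, hhat, hpsi]
    simp only [diagonal_mul, if_pos hj0]
    simp only [mulVec, dotProduct, hadamard_apply, transpose_apply, mul_apply, mul_one,
      Finset.mul_sum]
    exact Fintype.sum_congr _ _ fun a => Fintype.sum_congr _ _ fun b => by ring

/-- Sinkhorn-type computation of the projections of the path-graph
structured tensor `K̂ ⊙ Û` (the modes are indexed `0, …, m`, i.e. `𝒯 = m + 1`):
`P_{0,m}(K̂ ⊙ Û) = U ⊙ Ψ_0` and
`P_j(K̂ ⊙ Û) = u_j ⊙ ((Ψ̂_jᵀ ⊙ (Ψ_j Uᵀ)) 𝟏)` for `j = 1, …, m-1`. -/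
theorem path_graph_projections
    (N m : ℕ) (hm : 2 ≤ m) (ε : ℝ) (hε : 0 < ε)
    (C : Matrix (Fin N) (Fin N) EReal) (hC : ∀ i k, C i k ≠ ⊥)
    (K : Matrix (Fin N) (Fin N) ℝ) (hK : ∀ i k, K i k = expNegE ε (C i k))
    (U : Matrix (Fin N) (Fin N) ℝ) (u : ℕ → Fin N → ℝ)
    (Khat Uhat : (Fin (m + 1) → Fin N) → ℝ)
    (hKhat : ∀ x, Khat x = ∏ t : Fin m, K (x t.castSucc) (x t.succ))
    (hUhat : ∀ x, Uhat x = U (x 0) (x (Fin.last m)) *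
      ∏ t : Fin (m + 1), (if 0 < (t : ℕ) ∧ (t : ℕ) < m then u (t : ℕ) (x t) else 1))
    (hatPsi Psi : ℕ → Matrix (Fin N) (Fin N) ℝ)
    (hhat1 : hatPsi 1 = K)
    (hhatrec : ∀ j : ℕ, 2 ≤ j → j ≤ m →
      hatPsi j = hatPsi (j - 1) * Matrix.diagonal (u (j - 1)) * K)
    (hpsiLast : Psi (m - 1) = K)
    (hpsirec : ∀ j : ℕ, j + 2 ≤ m →
      Psi j = K * Matrix.diagonal (u (j + 1)) * Psi (j + 1)) :
    (tbiproj (0 : Fin (m + 1)) (Fin.last m) (fun x => Khat x * Uhat x)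
        = fun p => U p.1 p.2 * Psi 0 p.1 p.2) ∧
    ∀ j : Fin (m + 1), 0 < (j : ℕ) → (j : ℕ) < m →
      tproj j (fun x => Khat x * Uhat x)
        = fun i => u (j : ℕ) i *
            ((((hatPsi (j : ℕ))ᵀ.hadamard (Psi (j : ℕ) * Uᵀ)).mulVec
              (fun _ => (1 : ℝ))) i) :=
  path_graph_projections_general N m hm K U u Khat Uhat hKhat hUhat hatPsi Psi hhat1 hhatrec
    hpsiLast hpsirec
end
end

section
/- In the setting of the multi-species tensor (K̂, Û and the recursively defined matrices Ψ̂_j, Ψ_j), the single-mode (marginal) projections onto the time modes satisfy: P_𝒯(K̂ ⊙ Û) = u_𝒯 ⊙ ((Ψ̂_𝒯 ⊙ U_{−1,𝒯})^T 𝟏_L) and, for every j = 1,…,𝒯−1, P_j(K̂ ⊙ Û) = u_j ⊙ ((Ψ̂_j ⊙ Ψ_j ⊙ U_{−1,j})^T 𝟏_L), where 𝟏_L ∈ ℝ^L is the all-ones vector. -/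
open scoped BigOperators
open Filter Matrix

noncomputable section

/-- The bimarginal projection of a multi-species tensor onto the species mode and the
time mode `j`: `(P_{-1,j}(M))_{ℓ,i} = ∑_{x : x j = i} M(ℓ, x)`. -/
def msBiproj {L m N : ℕ} (j : Fin (m + 1)) (M : Fin L × (Fin (m + 1) → Fin N) → ℝ) :
    Matrix (Fin L) (Fin N) ℝ :=
  Matrix.of fun ℓ i => ∑ x : Fin (m + 1) → Fin N, if x j = i then M (ℓ, x) else 0

/-- The marginal projection of a multi-species tensor onto the time mode `j`. -/
def msProj {L m N : ℕ} (j : Fin (m + 1)) (M : Fin L × (Fin (m + 1) → Fin N) → ℝ) :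
    Fin N → ℝ :=
  fun i => ∑ ℓ : Fin L, ∑ x : Fin (m + 1) → Fin N, if x j = i then M (ℓ, x) else 0

/-!
For a fixed species `ℓ`, the entry `(K̂ ⊙ Û)(ℓ, x)` is the weight of the path
`x₀ → x₁ → ⋯ → x_𝒯` in a chain with vertex weights `W₀ = U_{-1,0}(ℓ, ·)`,
`W_t = U_{-1,t}(ℓ, ·) ⊙ u_t` and transition weights `K`. Summing the path weights over all
paths through `i` at time `j` factors, by distributivity, into a forward sum over the prefix
`x₀, …, x_j` and a backward sum over the suffix `x_j, …, x_𝒯` (the forward–backward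
algorithm). The `ℓ`-th rows of `Ψ̂_j` and `Ψ_j` obey exactly the forward and backward
recursions, and summing over `ℓ` gives the projections.
-/

namespace Matrix

variable {m n α : Type*}

lemma hadamard_row [Mul α] (A B : Matrix m n α) (i : m) : (A ⊙ B) i = A i * B i :=
  rfl

lemma mul_diagonal_row [NonUnitalNonAssocSemiring α] [Fintype n] [DecidableEq n]
    (A : Matrix m n α) (d : n → α) (i : m) : (A * diagonal d) i = A i * d :=
  funext fun k => mul_diagonal d A i k

lemma transpose_mulVec_one_apply [NonAssocSemiring α] [Fintype m] (A : Matrix m n α) (j : n) :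
    (Aᵀ *ᵥ fun _ => 1) j = ∑ i, A i j := by
  simp [mulVec, dotProduct]

end Matrix

namespace ChainTensor

lemma sum_fin_cons {M S : Type*} [AddCommMonoid M] [Fintype S] {n : ℕ}
    (f : (Fin (n + 1) → S) → M) : ∑ x, f x = ∑ a, ∑ y, f (Fin.cons a y) := by
  rw [← (Fin.consEquiv _).sum_comp, Fintype.sum_prod_type]
  rfl

section Chain

variable {R S : Type*} [CommSemiring R] (K : Matrix S S R)

def pathWeight (W : ℕ → S → R) {n : ℕ} (x : Fin (n + 1) → S) : R :=
  (∏ t : Fin (n + 1), W t (x t)) * ∏ t : Fin n, K (x t.castSucc) (x t.succ)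

lemma pathWeight_cons (W : ℕ → S → R) {n : ℕ} (a : S) (y : Fin (n + 1) → S) :
    pathWeight K W (Fin.cons a y : Fin (n + 2) → S)
      = W 0 a * K a (y 0) * pathWeight K (fun t => W (t + 1)) y := by
  simp [pathWeight, Fin.prod_univ_succ (n := n + 1), Fin.prod_univ_succ (n := n)]
  ring

variable [Fintype S]

def forward (W : ℕ → S → R) : ℕ → S → R
  | 0 => W 0
  | t + 1 => (forward W t ᵥ* K) * W (t + 1)

/-- `backward K V r` sums over the `r` steps that follow a fixed vertex; `V t` is the weight of
the `t`-th vertex after it, so the fixed vertex's own weight is not included. -/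
def backward : (ℕ → S → R) → ℕ → S → R
  | _, 0 => 1
  | V, r + 1 => K *ᵥ (V 0 * backward (fun t => V (t + 1)) r)

/-- The weights of the path obtained by summing out its first vertex. -/
def absorbFirst (W : ℕ → S → R) : ℕ → S → R
  | 0 => (W 0 ᵥ* K) * W 1
  | t + 1 => W (t + 2)

lemma forward_absorbFirst (W : ℕ → S → R) (j : ℕ) :
    forward K (absorbFirst K W) j = forward K W (j + 1) := by
  induction j with
  | zero => rfl
  | succ j ih => rw [forward, ih]; rfl

lemma sum_pathWeight_cons (W : ℕ → S → R) {n : ℕ} (y : Fin (n + 1) → S) :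
    ∑ a, W 0 a * K a (y 0) * pathWeight K (fun t => W (t + 1)) y
      = pathWeight K (absorbFirst K W) y := by
  simp only [pathWeight, Fin.prod_univ_succ (n := n), Fin.val_zero, Fin.val_succ, absorbFirst,
    Pi.mul_apply, vecMul, dotProduct, Finset.sum_mul]
  refine Finset.sum_congr rfl fun a _ => ?_
  ring

theorem sum_pathWeight_eq_forward_mul_backward [DecidableEq S] (n : ℕ) (W : ℕ → S → R)
    (j : Fin (n + 1)) (i : S) :
    ∑ x : Fin (n + 1) → S, (if x j = i then pathWeight K W x else 0)
      = (forward K W j * backward K (fun t => W (j + 1 + t)) (n - j)) i := by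
  induction n generalizing W i with
  | zero =>
    obtain rfl : j = 0 := Fin.fin_one_eq_zero j
    rw [sum_fin_cons]
    simp [pathWeight, forward, backward]
  | succ n ih =>
    rw [sum_fin_cons]
    induction j using Fin.cases with
    | zero =>
      calc ∑ a, ∑ y, (if (Fin.cons a y : Fin (n + 2) → S) 0 = i then
              pathWeight K W (Fin.cons a y : Fin (n + 2) → S) else 0)
          = W 0 i * ∑ k, K i k * ∑ y : Fin (n + 1) → S,
              (if y 0 = k then pathWeight K (fun t => W (t + 1)) y else 0) := by
            simp only [Fin.cons_zero, pathWeight_cons, Finset.sum_ite_irrel, Finset.sum_const_zero,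
              Finset.sum_ite_eq', Finset.mem_univ, if_true, Finset.mul_sum, mul_ite, mul_zero]
            rw [Finset.sum_comm]
            simp [mul_assoc]
        _ = _ := by
            simp only [ih, Fin.val_zero, Nat.sub_zero, zero_add, add_assoc, forward, backward,
              Pi.mul_apply, mulVec, dotProduct]
    | succ j =>
      have hshift : (fun t => absorbFirst K W (j + 1 + t)) = fun t => W ((j.succ : ℕ) + 1 + t) := by
        funext t
        rw [show (j : ℕ) + 1 + t = (j + t) + 1 by omega, Fin.val_succ]
        exact congrArg W (by omega)
      simp only [Fin.cons_succ, pathWeight_cons]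
      rw [Finset.sum_comm]
      simp only [Finset.sum_ite_irrel, Finset.sum_const_zero, sum_pathWeight_cons, ih, hshift,
        forward_absorbFirst, Fin.val_succ, Nat.add_sub_add_right]

end Chain

variable {L N : ℕ}

lemma msProj_pathWeight (K : Matrix (Fin N) (Fin N) ℝ) (W : Fin L → ℕ → Fin N → ℝ) {m : ℕ}
    (j : Fin (m + 1)) :
    msProj j (fun p => pathWeight K (W p.1) p.2)
      = ∑ ℓ, forward K (W ℓ) j * backward K (fun t => W ℓ (j + 1 + t)) (m - j) := by
  funext i
  simp only [msProj, Finset.sum_apply, sum_pathWeight_eq_forward_mul_backward]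

def speciesWeight (Um : ℕ → Matrix (Fin L) (Fin N) ℝ) (u : ℕ → Fin N → ℝ) (ℓ : Fin L) :
    ℕ → Fin N → ℝ
  | 0 => Um 0 ℓ
  | t + 1 => Um (t + 1) ℓ * u (t + 1)

variable {K : Matrix (Fin N) (Fin N) ℝ} {Um : ℕ → Matrix (Fin L) (Fin N) ℝ} {u : ℕ → Fin N → ℝ}

lemma speciesWeight_of_pos (ℓ : Fin L) {t : ℕ} (ht : 0 < t) :
    speciesWeight Um u ℓ t = Um t ℓ * u t := by
  obtain ⟨t, rfl⟩ : ∃ s, t = s + 1 := ⟨t - 1, by omega⟩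
  rfl

lemma pathWeight_speciesWeight (ℓ : Fin L) {m : ℕ} (x : Fin (m + 1) → Fin N) :
    pathWeight K (speciesWeight Um u ℓ) x
      = (∏ t : Fin m, K (x t.castSucc) (x t.succ)) * (Um 0 ℓ (x 0) *
          ∏ t : Fin m, (Um ((t : ℕ) + 1) ℓ (x t.succ) * u ((t : ℕ) + 1) (x t.succ))) := by
  simp [pathWeight, Fin.prod_univ_succ (n := m), speciesWeight]
  ring

lemma forward_speciesWeight {m : ℕ} {hatPsi : ℕ → Matrix (Fin L) (Fin N) ℝ}
    (hhat1 : hatPsi 1 = Um 0 * K)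
    (hhatrec : ∀ j : ℕ, 2 ≤ j → j ≤ m →
      hatPsi j = (hatPsi (j - 1) ⊙ Um (j - 1)) * diagonal (u (j - 1)) * K)
    (ℓ : Fin L) {j : ℕ} (hj : 1 ≤ j) (hjm : j ≤ m) :
    forward K (speciesWeight Um u ℓ) j = hatPsi j ℓ * speciesWeight Um u ℓ j := by
  induction j, hj using Nat.le_induction with
  | base => rw [hhat1, mul_apply_eq_vecMul]; rfl
  | succ j hj ih =>
    obtain ⟨j, rfl⟩ : ∃ k, j = k + 1 := ⟨j - 1, by omega⟩
    rw [hhatrec (j + 1 + 1) (by omega) hjm, Nat.add_sub_cancel, mul_apply_eq_vecMul,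
      mul_diagonal_row, hadamard_row, forward, ih (by omega)]
    simp only [speciesWeight, mul_assoc]

lemma backward_speciesWeight {m : ℕ} {Psi : ℕ → Matrix (Fin L) (Fin N) ℝ}
    (hpsiLast : Psi (m - 1) = Um m * diagonal (u m) * Kᵀ)
    (hpsirec : ∀ j : ℕ, j + 2 ≤ m →
      Psi j = (Psi (j + 1) ⊙ Um (j + 1)) * diagonal (u (j + 1)) * Kᵀ)
    (ℓ : Fin L) (r : ℕ) :
    ∀ j, j + r + 1 = m →
      backward K (fun t => speciesWeight Um u ℓ (j + 1 + t)) (r + 1) = Psi j ℓ := by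
  induction r with
  | zero =>
    rintro j rfl
    rw [show j + 0 + 1 - 1 = j by omega] at hpsiLast
    rw [hpsiLast, mul_apply_eq_vecMul, vecMul_transpose, mul_diagonal_row]
    simp only [backward, speciesWeight, mul_one]
  | succ r ih =>
    intro j hj
    have hshift : (fun t => speciesWeight Um u ℓ (j + 1 + (t + 1)))
        = fun t => speciesWeight Um u ℓ (j + 1 + 1 + t) := by
      funext t; congr 1; omega
    rw [hpsirec j (by omega), mul_apply_eq_vecMul, vecMul_transpose, mul_diagonal_row,
      hadamard_row, ← ih (j + 1) (by omega), backward, hshift]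
    simp only [speciesWeight]
    congr 1
    ring

end ChainTensor

theorem multispecies_marginal_projections_general
    (L N m : ℕ) (hm : 1 ≤ m)
    (K : Matrix (Fin N) (Fin N) ℝ)
    (Um : ℕ → Matrix (Fin L) (Fin N) ℝ) (u : ℕ → Fin N → ℝ)
    (Khat Uhat : Fin L × (Fin (m + 1) → Fin N) → ℝ)
    (hKhat : ∀ ℓ x, Khat (ℓ, x) = ∏ t : Fin m, K (x t.castSucc) (x t.succ))
    (hUhat : ∀ ℓ x, Uhat (ℓ, x) = Um 0 ℓ (x 0) *
      ∏ t : Fin m, (Um ((t : ℕ) + 1) ℓ (x t.succ) * u ((t : ℕ) + 1) (x t.succ)))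
    (hatPsi Psi : ℕ → Matrix (Fin L) (Fin N) ℝ)
    (hhat1 : hatPsi 1 = Um 0 * K)
    (hhatrec : ∀ j : ℕ, 2 ≤ j → j ≤ m →
      hatPsi j = ((hatPsi (j - 1)).hadamard (Um (j - 1))) * Matrix.diagonal (u (j - 1)) * K)
    (hpsiLast : Psi (m - 1) = Um m * Matrix.diagonal (u m) * Kᵀ)
    (hpsirec : ∀ j : ℕ, j + 2 ≤ m →
      Psi j = ((Psi (j + 1)).hadamard (Um (j + 1))) * Matrix.diagonal (u (j + 1)) * Kᵀ)
    :
    (msProj (Fin.last m) (fun p => Khat p * Uhat p)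
        = fun i => u m i *
            ((((hatPsi m).hadamard (Um m))ᵀ.mulVec (fun _ => (1 : ℝ))) i)) ∧
    ∀ j : Fin (m + 1), 0 < (j : ℕ) → (j : ℕ) < m →
      msProj j (fun p => Khat p * Uhat p)
        = fun i => u (j : ℕ) i *
            (((((hatPsi (j : ℕ)).hadamard (Psi (j : ℕ))).hadamard (Um (j : ℕ)))ᵀ.mulVec
              (fun _ => (1 : ℝ))) i) := by
  open ChainTensor in
  have hT : (fun p => Khat p * Uhat p) = fun p => pathWeight K (speciesWeight Um u p.1) p.2 := by
    funext ⟨ℓ, x⟩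
    rw [hKhat, hUhat, pathWeight_speciesWeight]
  refine ⟨?_, fun j hj0 hjm => ?_⟩
  · rw [hT, msProj_pathWeight, Fin.val_last, Nat.sub_self]
    funext i
    simp only [backward, mul_one, forward_speciesWeight hhat1 hhatrec _ hm le_rfl,
      speciesWeight_of_pos _ hm, transpose_mulVec_one_apply, Finset.sum_apply, Pi.mul_apply,
      hadamard_apply, Finset.mul_sum]
    exact Finset.sum_congr rfl fun ℓ _ => by ring
  · obtain ⟨r, hr⟩ : ∃ r, m - j = r + 1 := ⟨m - j - 1, by omega⟩
    rw [hT, msProj_pathWeight, hr]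
    funext i
    simp only [backward_speciesWeight hpsiLast hpsirec _ r j (by omega),
      forward_speciesWeight hhat1 hhatrec _ hj0 hjm.le, speciesWeight_of_pos _ hj0,
      transpose_mulVec_one_apply, Finset.sum_apply, Pi.mul_apply, hadamard_apply, Finset.mul_sum]
    exact Finset.sum_congr rfl fun ℓ _ => by ring

/-- Sinkhorn-type computation of the single-mode (time-marginal)
projections of the multi-species tensor `K̂ ⊙ Û`. -/
theorem multispecies_marginal_projections
    (L N m : ℕ) (hm : 1 ≤ m) (ε : ℝ) (hε : 0 < ε)
    (C : Matrix (Fin N) (Fin N) EReal) (hC : ∀ i k, C i k ≠ ⊥)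
    (K : Matrix (Fin N) (Fin N) ℝ) (hK : ∀ i k, K i k = expNegE ε (C i k))
    (Um : ℕ → Matrix (Fin L) (Fin N) ℝ) (u : ℕ → Fin N → ℝ)
    (Khat Uhat : Fin L × (Fin (m + 1) → Fin N) → ℝ)
    (hKhat : ∀ ℓ x, Khat (ℓ, x) = ∏ t : Fin m, K (x t.castSucc) (x t.succ))
    (hUhat : ∀ ℓ x, Uhat (ℓ, x) = Um 0 ℓ (x 0) *
      ∏ t : Fin m, (Um ((t : ℕ) + 1) ℓ (x t.succ) * u ((t : ℕ) + 1) (x t.succ)))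
    (hatPsi Psi : ℕ → Matrix (Fin L) (Fin N) ℝ)
    (hhat1 : hatPsi 1 = Um 0 * K)
    (hhatrec : ∀ j : ℕ, 2 ≤ j → j ≤ m →
      hatPsi j = ((hatPsi (j - 1)).hadamard (Um (j - 1))) * Matrix.diagonal (u (j - 1)) * K)
    (hpsiLast : Psi (m - 1) = Um m * Matrix.diagonal (u m) * Kᵀ)
    (hpsirec : ∀ j : ℕ, j + 2 ≤ m →
      Psi j = ((Psi (j + 1)).hadamard (Um (j + 1))) * Matrix.diagonal (u (j + 1)) * Kᵀ)
    :
    (msProj (Fin.last m) (fun p => Khat p * Uhat p)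
        = fun i => u m i *
            ((((hatPsi m).hadamard (Um m))ᵀ.mulVec (fun _ => (1 : ℝ))) i)) ∧
    ∀ j : Fin (m + 1), 0 < (j : ℕ) → (j : ℕ) < m →
      msProj j (fun p => Khat p * Uhat p)
        = fun i => u (j : ℕ) i *
            (((((hatPsi (j : ℕ)).hadamard (Psi (j : ℕ))).hadamard (Um (j : ℕ)))ᵀ.mulVec
              (fun _ => (1 : ℝ))) i) :=
  multispecies_marginal_projections_general L N m hm K Um u Khat Uhat hKhat hUhat hatPsi Psi hhat1
    hhatrec hpsiLast hpsirec
end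
end

section
/- Let β > 0 and define f : ℝ → ℝ ∪ {+∞} by f(x) = x/(β − x) for x ∈ [0, β) and f(x) = +∞ otherwise. Then the Fenchel conjugate f*(y) = sup_{x∈ℝ} (x·y − f(x)) is given by f*(y) = 0 if y ≤ 1/β, and f*(y) = y·β − 2·√(y·β) + 1 if y ≥ 1/β. -/
/-!
Writing `t = β - x`, one has `x y - x / (β - x) = y β + 1 - (y t + β / t)`, and by AM-GM
`y t + β / t ≥ 2 √(y β)`, with equality at `t = √(y β) / y`. This `t` corresponds to a point
`x = β - t` of the domain `[0, β)` exactly when `y β ≥ 1`. For `y ≤ 1 / β` instead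
`x y ≤ x / β ≤ x / (β - x)` on the domain, so the supremum is the value `0` at `x = 0`.
-/

open Set

lemma EReal.iSup_coe_mul_sub_eq {f : ℝ → EReal} {φ : ℝ → ℝ} {S : Set ℝ} {y M x₀ : ℝ}
    (hf : ∀ x ∈ S, f x = φ x) (hf_top : ∀ x ∉ S, f x = ⊤)
    (hle : ∀ x ∈ S, x * y - φ x ≤ M) (hx₀ : x₀ ∈ S) (hM : x₀ * y - φ x₀ = M) :
    (⨆ x : ℝ, ((x * y : ℝ) : EReal) - f x) = M := by
  refine IsLUB.iSup_eq (IsGreatest.isLUB ⟨⟨x₀, ?_⟩, ?_⟩)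
  · dsimp only
    rw [hf x₀ hx₀, ← EReal.coe_sub, hM]
  · rintro _ ⟨x, rfl⟩
    dsimp only
    by_cases hx : x ∈ S
    · rw [hf x hx, ← EReal.coe_sub, EReal.coe_le_coe_iff]
      exact hle x hx
    · simp only [hf_top x hx, EReal.sub_top, bot_le]

lemma two_sqrt_mul_le_mul_add_div {y β t : ℝ} (hy : 0 ≤ y) (hβ : 0 ≤ β) (ht : 0 < t) :
    2 * √(y * β) ≤ y * t + β / t := by
  have hprod : √(y * t) * √(β / t) = √(y * β) := by
    rw [← Real.sqrt_mul (by positivity)]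
    field_simp
  calc 2 * √(y * β) = 2 * √(y * t) * √(β / t) := by rw [mul_assoc, hprod]
    _ ≤ √(y * t) ^ 2 + √(β / t) ^ 2 := two_mul_le_add_sq _ _
    _ = y * t + β / t := by rw [Real.sq_sqrt (by positivity), Real.sq_sqrt (by positivity)]

lemma mul_add_div_eq_two_sqrt {y β : ℝ} (hy : 0 < y) (hβ : 0 < β) :
    y * (√(y * β) / y) + β / (√(y * β) / y) = 2 * √(y * β) := by
  have hs : 0 < √(y * β) := by positivity
  have hs2 : √(y * β) ^ 2 = y * β := Real.sq_sqrt (by positivity)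
  field_simp
  linear_combination -hs2

lemma mul_sub_div_sub_eq {x y β : ℝ} (hx : x ≠ β) :
    x * y - x / (β - x) = y * β + 1 - (y * (β - x) + β / (β - x)) := by
  have : β - x ≠ 0 := sub_ne_zero.mpr hx.symm
  field_simp
  ring

lemma mul_sub_div_sub_nonpos {x y β : ℝ} (hx₀ : 0 ≤ x) (hxβ : x < β) (hy : y ≤ 1 / β) :
    x * y - x / (β - x) ≤ 0 := by
  have hyx : x * y ≤ x / β := by
    simpa only [mul_one_div] using mul_le_mul_of_nonneg_left hy hx₀
  have hdiv : x / β ≤ x / (β - x) := div_le_div_of_nonneg_left hx₀ (sub_pos.mpr hxβ) (by linarith)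
  linarith

/-- The Fenchel conjugate of the congestion cost
`f(x) = x/(β-x) + I_{[0,β]}(x)` (with `f(β) = +∞`) is `f*(y) = 0` for `y ≤ 1/β` and
`f*(y) = yβ - 2√(yβ) + 1` for `y ≥ 1/β`. -/
theorem congestion_cost_conjugate
    (β : ℝ) (hβ : 0 < β) (f : ℝ → EReal)
    (hf₁ : ∀ x : ℝ, 0 ≤ x → x < β → f x = ((x / (β - x) : ℝ) : EReal))
    (hf₂ : ∀ x : ℝ, ¬ (0 ≤ x ∧ x < β) → f x = ⊤) :
    (∀ y : ℝ, y ≤ 1 / β → (⨆ x : ℝ, ((x * y : ℝ) : EReal) - f x) = 0) ∧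
    (∀ y : ℝ, 1 / β ≤ y →
      (⨆ x : ℝ, ((x * y : ℝ) : EReal) - f x)
        = ((y * β - 2 * Real.sqrt (y * β) + 1 : ℝ) : EReal)) := by
  have hf : ∀ x ∈ Ico 0 β, f x = ((x / (β - x) : ℝ) : EReal) := fun x hx => hf₁ x hx.1 hx.2
  refine ⟨fun y hy => ?_, fun y hy => ?_⟩
  · rw [← EReal.coe_zero]
    exact EReal.iSup_coe_mul_sub_eq hf hf₂ (fun x hx => mul_sub_div_sub_nonpos hx.1 hx.2 hy)
      ⟨le_rfl, hβ⟩ (by simp)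
  · have hy₀ : 0 < y := lt_of_lt_of_le (by positivity) hy
    have hyβ : 1 ≤ y * β := by rwa [div_le_iff₀ hβ] at hy
    set t := √(y * β) / y
    have ht₀ : 0 < t := by positivity
    have htβ : t ≤ β := by
      rw [div_le_iff₀ hy₀, mul_comm β]
      exact Real.sqrt_le_self_iff.mpr (Or.inr hyβ)
    refine EReal.iSup_coe_mul_sub_eq hf hf₂ (fun x hx => ?_)
      (x₀ := β - t) ⟨by linarith, by linarith⟩ ?_
    · rw [mul_sub_div_sub_eq hx.2.ne]
      linarith [two_sqrt_mul_le_mul_add_div hy₀.le hβ.le (sub_pos.mpr hx.2)]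
    · rw [mul_sub_div_sub_eq (by linarith), sub_sub_cancel, mul_add_div_eq_two_sqrt hy₀ hβ]
      ring
end
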